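/- arXiv:1709.09544 — 6 statements merged into one kernel-verified Lean document; each statement's English description precedes it below -/
import Mathlib

section
/- Let 0 < q1 < q2 ≤ 1 and r = q1/q2. Then sin((q1+q2)π/2) ≥ (1 − r)·sin(q2π/2). -/
open Real

theorem stmt4 (q1 q2 : ℝ) (h1 : 0 < q1) (h2 : q1 < q2) (h3 : q2 ≤ 1)
    (r : ℝ) (hr : r = q1 / q2) :
    sin ((q1 + q2) * π / 2) ≥ (1 - r) * sin (q2 * π / 2) := by
  have hpi := Real.pi_pos
  have hq2 : (0:ℝ) < q2 := h1.trans h2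
  set l : ℝ := q1 / (2 - q2) with hl
  have hden : (0:ℝ) < 2 - q2 := by linarith
  have hl0 : 0 ≤ l := le_of_lt (div_pos h1 hden)
  have hl1 : l ≤ 1 := by
    rw [hl, div_le_one hden]; linarith
  have hx : q2 * π / 2 ∈ Set.Icc 0 π := by
    constructor
    · positivity
    · nlinarith
  have hpi_mem : π ∈ Set.Icc 0 π := ⟨le_of_lt hpi, le_refl _⟩
  have hcomb : (1 - l) * (q2 * π / 2) + l * π = (q1 + q2) * π / 2 := by
    have : l * (2 - q2) = q1 := by
      rw [hl]; field_simp
    nlinarith [this]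
  have hconc := strictConcaveOn_sin_Icc.concaveOn.2 hx hpi_mem
    (by linarith : (0:ℝ) ≤ 1 - l) hl0 (by ring)
  simp only [smul_eq_mul, Real.sin_pi, mul_zero, add_zero] at hconc
  rw [hcomb] at hconc
  have hsin0 : 0 ≤ sin (q2 * π / 2) := Real.sin_nonneg_of_mem_Icc hx
  have hlr : 1 - r ≤ 1 - l := by
    rw [hr, hl, sub_le_sub_iff_left, div_le_div_iff₀ hden hq2]
    nlinarith
  calc sin ((q1 + q2) * π / 2) ≥ (1 - l) * sin (q2 * π / 2) := hconc
    _ ≥ (1 - r) * sin (q2 * π / 2) := by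
        exact mul_le_mul_of_nonneg_right hlr hsin0
end

section
/- Let 0 < q1 < q2 ≤ 1, ρ1 = sin(q1π/2)/sin((q2−q1)π/2), ρ2 = sin(q2π/2)/sin((q2−q1)π/2), ρ = ρ1/ρ2, and r = q1/q2. Then for every u ∈ (0, ρ], one has u·(ρ1 − r·ρ2) ≤ ρ2 − 1 + r·(1 − ρ1). -/
open Real

/-- `sin x / x` is decreasing: from concavity of `sin` on `[0, π]`. -/
lemma sin_div_mono_aux {x y : ℝ} (hx : 0 ≤ x) (hxy : x ≤ y) (hyπ : y ≤ π)
    (hy0 : 0 < y) : x * Real.sin y ≤ y * Real.sin x := by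
  have hmem0 : (0:ℝ) ∈ Set.Icc (0:ℝ) π := ⟨le_refl 0, Real.pi_pos.le⟩
  have hmemy : y ∈ Set.Icc (0:ℝ) π := ⟨le_trans hx hxy, hyπ⟩
  have h01 : (0:ℝ) ≤ 1 - x / y := by
    have : x / y ≤ 1 := (div_le_one hy0).mpr hxy
    linarith
  have h02 : 0 ≤ x / y := div_nonneg hx hy0.le
  have hsum : (1 - x / y) + x / y = 1 := by ring
  have h := strictConcaveOn_sin_Icc.concaveOn.2 hmem0 hmemy h01 h02 hsum
  simp only [smul_eq_mul, mul_zero, zero_add, Real.sin_zero, add_zero,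
    div_mul_cancel₀ _ (ne_of_gt hy0)] at h
  rw [div_mul_eq_mul_div, div_le_iff₀ hy0] at h
  nlinarith [h]

set_option maxHeartbeats 1000000 in
theorem stmt5 (q1 q2 : ℝ) (h1 : 0 < q1) (h2 : q1 < q2) (h3 : q2 ≤ 1)
    (ρ1 ρ2 ρ r : ℝ)
    (hρ1 : ρ1 = sin (q1 * π / 2) / sin ((q2 - q1) * π / 2))
    (hρ2 : ρ2 = sin (q2 * π / 2) / sin ((q2 - q1) * π / 2))
    (hρ : ρ = ρ1 / ρ2) (hr : r = q1 / q2) :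
    ∀ u : ℝ, 0 < u → u ≤ ρ → u * (ρ1 - r * ρ2) ≤ ρ2 - 1 + r * (1 - ρ1) := by
  intro u hu huρ
  have hπ := Real.pi_pos
  set a := q1 * π / 2 with ha
  set b := q2 * π / 2 with hb
  have hab : (q2 - q1) * π / 2 = b - a := by rw [ha, hb]; ring
  rw [hab] at hρ1 hρ2
  have ha0 : 0 < a := by positivity
  have hab' : a < b := by
    rw [ha, hb]
    have := Real.pi_pos
    nlinarith
  have hbπ : b ≤ π / 2 := by
    rw [hb]
    nlinarith
  -- positivity of the sines
  have hsa : 0 < Real.sin a := Real.sin_pos_of_pos_of_lt_pi ha0 (by linarith)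
  have hsb : 0 < Real.sin b :=
    Real.sin_pos_of_pos_of_lt_pi (lt_trans ha0 hab') (by linarith)
  have hss : 0 < Real.sin (b - a) :=
    Real.sin_pos_of_pos_of_lt_pi (by linarith) (by linarith)
  -- sin a < sin b (strict mono on [-π/2, π/2])
  have hsab : Real.sin a < Real.sin b := by
    apply Real.sin_lt_sin_of_lt_of_le_pi_div_two (by linarith) hbπ hab'
  -- sin(a+b) ≥ sin(b-a): difference is 2 cos b sin a ≥ 0
  have hcb : 0 ≤ Real.cos b := Real.cos_nonneg_of_mem_Icc ⟨by linarith, hbπ⟩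
  have h5 : Real.sin (b - a) ≤ Real.sin (a + b) := by
    rw [Real.sin_sub, Real.sin_add]
    nlinarith
  -- sin(b-a) ≥ ((b-a)/b) sin b  i.e. (b-a) sin b ≤ b sin(b-a)
  have h6 : (b - a) * Real.sin b ≤ b * Real.sin (b - a) :=
    sin_div_mono_aux (by linarith) (by linarith) (by linarith) (by linarith)
  -- also a * sin b ≤ b * sin a  (gives r ≤ ρ)
  have h7 : a * Real.sin b ≤ b * Real.sin a :=
    sin_div_mono_aux ha0.le hab'.le (by linarith) (by linarith)
  -- identity: sin(a+b) * sin(b-a) = sin²b - sin²a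
  have hid : Real.sin (a + b) * Real.sin (b - a)
      = Real.sin b ^ 2 - Real.sin a ^ 2 := by
    rw [Real.sin_add, Real.sin_sub]
    nlinarith [Real.sin_sq_add_cos_sq a, Real.sin_sq_add_cos_sq b]
  -- translate r in terms of a, b
  have hq2 : 0 < q2 := lt_trans h1 h2
  have hr' : r = a / b := by
    rw [hr, ha, hb]
    rw [div_eq_div_iff (by positivity) (by positivity)]
    ring
  have hb0 : 0 < b := lt_trans ha0 hab'
  -- key inequality: ρ1² ≤ ρ2² - (1 - r) ρ2
  have hρ1v : ρ1 = Real.sin a / Real.sin (b - a) := hρ1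
  have hρ2v : ρ2 = Real.sin b / Real.sin (b - a) := hρ2
  have hρ1pos : 0 < ρ1 := by rw [hρ1v]; positivity
  have hρ2pos : 0 < ρ2 := by rw [hρ2v]; positivity
  have hkey : ρ1 ^ 2 ≤ ρ2 ^ 2 - (1 - r) * ρ2 := by
    rw [hρ1v, hρ2v, hr']
    rw [div_pow, div_pow]
    have h8 : (1 - a / b) * Real.sin b ≤ Real.sin (a + b) := by
      have hba : 1 - a / b = (b - a) / b := by field_simp
      rw [hba, div_mul_eq_mul_div, div_le_iff₀ hb0]
      nlinarith [h5, h6]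
    have hmul : (1 - a / b) * Real.sin b * Real.sin (b - a)
        ≤ Real.sin (a + b) * Real.sin (b - a) :=
      mul_le_mul_of_nonneg_right h8 hss.le
    rw [hid] at hmul
    have hG : Real.sin a ^ 2
        ≤ Real.sin b ^ 2 - (1 - a / b) * Real.sin b * Real.sin (b - a) := by
      linarith
    calc Real.sin a ^ 2 / Real.sin (b - a) ^ 2
        ≤ (Real.sin b ^ 2 - (1 - a / b) * Real.sin b * Real.sin (b - a))
            / Real.sin (b - a) ^ 2 := by gcongr
      _ = Real.sin b ^ 2 / Real.sin (b - a) ^ 2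
            - (1 - a / b) * (Real.sin b / Real.sin (b - a)) := by
          field_simp
  -- coefficient nonneg: r * ρ2 ≤ ρ1
  have hcoef : r * ρ2 ≤ ρ1 := by
    rw [hr', hρ1v, hρ2v, div_mul_div_comm, div_le_div_iff₀ (by positivity) hss]
    nlinarith [h7, hss]
  have step1 : u * (ρ1 - r * ρ2) ≤ ρ * (ρ1 - r * ρ2) :=
    mul_le_mul_of_nonneg_right huρ (by linarith)
  have step2 : ρ * (ρ1 - r * ρ2) ≤ ρ2 - 1 + r * (1 - ρ1) := by
    rw [hρ, div_mul_eq_mul_div, div_le_iff₀ hρ2pos]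
    nlinarith [hkey]
  linarith
end

section
/- Let 0 < q1 < q2 ≤ 1, ρ1 = sin(q1π/2)/sin((q2−q1)π/2), ρ2 = sin(q2π/2)/sin((q2−q1)π/2), ρ = ρ1/ρ2. Then for every u ∈ (0, ρ], one has (ρ1 − u·ρ2)^{q1} ≤ (ρ2 − u·ρ1)^{q2}. -/
/-!
Write α = q₁π/2 and β = q₂π/2, so that ρ₁ = sin α / sin (β - α), ρ₂ = sin β / sin (β - α) and
u ≤ ρ means u sin β ≤ sin α. By the intermediate value theorem there is φ ∈ [0, α) with
sin (α - φ) = u sin (β - φ), and then ρ₁ - uρ₂ = sin φ / sin (β - φ) and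
ρ₂ - uρ₁ = sin (α + β - φ) / sin (β - φ). The claim reduces to
sin φ ^ q₁ · sin (β - φ) ^ (q₂ - q₁) ≤ sin (α + β - φ) ^ q₂, which is weighted AM-GM followed by
concavity of sin on [0, π]: the weighted mean w of φ and β - φ satisfies w ≤ α + β - φ ≤ π - w.
-/

open Real Set

lemma sin_le_sin_of_le_of_le_pi_sub {w x : ℝ} (hw : 0 ≤ w) (hwx : w ≤ x) (hx : x ≤ π - w) :
    sin w ≤ sin x := by
  rcases le_or_gt x (π / 2) with h | h
  · exact sin_le_sin_of_le_of_le_pi_div_two (by linarith [pi_pos]) h hwx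
  · rw [← sin_pi_sub x]
    exact sin_le_sin_of_le_of_le_pi_div_two (by linarith [pi_pos]) (by linarith) (by linarith)

lemma sin_rpow_mul_sin_rpow_le_sin {a b x y : ℝ} (ha : 0 ≤ a) (hb : 0 ≤ b) (hab : a + b = 1)
    (hx : x ∈ Icc 0 π) (hy : y ∈ Icc 0 π) : sin x ^ a * sin y ^ b ≤ sin (a * x + b * y) :=
  calc sin x ^ a * sin y ^ b ≤ a * sin x + b * sin y :=
        geom_mean_le_arith_mean2_weighted ha hb (sin_nonneg_of_mem_Icc hx)
          (sin_nonneg_of_mem_Icc hy) hab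
    _ ≤ sin (a * x + b * y) := strictConcaveOn_sin_Icc.concaveOn.2 hx hy ha hb hab

lemma sin_rpow_mul_sin_rpow_le {q₁ q₂ φ : ℝ} (hq₁ : 0 ≤ q₁) (hq₁₂ : q₁ ≤ q₂) (hq₂ : 0 < q₂)
    (hq₂' : q₂ ≤ 1) (hφ₀ : 0 ≤ φ) (hφ : φ ≤ q₂ * π / 2) :
    sin φ ^ q₁ * sin (q₂ * π / 2 - φ) ^ (q₂ - q₁) ≤ sin (q₁ * π / 2 + q₂ * π / 2 - φ) ^ q₂ := by
  have hπ := pi_pos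
  set w := q₁ / q₂ * φ + (q₂ - q₁) / q₂ * (q₂ * π / 2 - φ) with hw
  have hq₂w : q₂ * w = q₁ * φ + (q₂ - q₁) * (q₂ * π / 2 - φ) := by
    rw [hw]; field_simp
  have hw₀ : 0 ≤ w := by
    rw [hw]
    have := mul_nonneg (div_nonneg hq₁ hq₂.le) hφ₀
    have := mul_nonneg (div_nonneg (sub_nonneg.2 hq₁₂) hq₂.le) (sub_nonneg.2 hφ)
    linarith
  have hw_le : w ≤ q₁ * π / 2 + q₂ * π / 2 - φ := by
    refine le_of_mul_le_mul_left ?_ hq₂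
    nlinarith [mul_nonneg hq₁ (sub_nonneg.2 hφ)]
  have hle_pi_sub : q₁ * π / 2 + q₂ * π / 2 - φ ≤ π - w := by
    refine le_of_mul_le_mul_left ?_ hq₂
    nlinarith [mul_nonneg (mul_nonneg hq₂.le hπ.le) (sub_nonneg.2 hq₂'),
      mul_nonneg (sub_nonneg.2 hq₁₂) hφ₀]
  have hmean : sin φ ^ (q₁ / q₂) * sin (q₂ * π / 2 - φ) ^ ((q₂ - q₁) / q₂) ≤ sin w :=
    sin_rpow_mul_sin_rpow_le_sin (div_nonneg hq₁ hq₂.le) (div_nonneg (sub_nonneg.2 hq₁₂) hq₂.le)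
      (by field_simp; ring) ⟨hφ₀, by nlinarith⟩ ⟨by linarith, by nlinarith⟩
  have hsφ : 0 ≤ sin φ := sin_nonneg_of_nonneg_of_le_pi hφ₀ (by nlinarith)
  have hsβφ : 0 ≤ sin (q₂ * π / 2 - φ) := sin_nonneg_of_nonneg_of_le_pi (by linarith) (by nlinarith)
  have h := rpow_le_rpow (by positivity) (hmean.trans
    (sin_le_sin_of_le_of_le_pi_sub hw₀ hw_le hle_pi_sub)) hq₂.le
  rwa [mul_rpow (by positivity) (by positivity), ← rpow_mul hsφ, ← rpow_mul hsβφ,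
    div_mul_cancel₀ _ hq₂.ne', div_mul_cancel₀ _ hq₂.ne'] at h

lemma exists_sin_sub_eq_mul_sin_sub {α β u : ℝ} (hu : 0 < u) (hα : 0 ≤ α) (hαβ : α < β)
    (hβα : β - α < π) (h : u * sin β ≤ sin α) :
    ∃ φ ∈ Ico 0 α, sin (α - φ) = u * sin (β - φ) := by
  have hend : 0 < u * sin (β - α) := mul_pos hu (sin_pos_of_pos_of_lt_pi (sub_pos.2 hαβ) hβα)
  have hcont : ContinuousOn (fun φ ↦ sin (α - φ) - u * sin (β - φ)) (Icc 0 α) := by fun_prop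
  have hzero : (0 : ℝ) ∈ Icc (sin (α - α) - u * sin (β - α)) (sin (α - 0) - u * sin (β - 0)) :=
    ⟨by simpa using hend.le, by simpa using h⟩
  obtain ⟨φ, hφ, hφ_eq⟩ := intermediate_value_Icc' hα hcont hzero
  refine ⟨φ, ⟨hφ.1, lt_of_le_of_ne hφ.2 ?_⟩, sub_eq_zero.1 hφ_eq⟩
  rintro rfl
  simp only [sub_self, sin_zero, zero_sub, neg_eq_zero] at hφ_eq
  exact hend.ne' hφ_eq

lemma sin_mul_sin_sub_sub_sin_mul_sin_sub (α β φ : ℝ) :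
    sin α * sin (β - φ) - sin β * sin (α - φ) = sin φ * sin (β - α) := by
  simp only [sin_sub]; ring

lemma sin_mul_sin_self_sub_sub_sin_mul_sin_self_sub (α β φ : ℝ) :
    sin β * sin (β - φ) - sin α * sin (α - φ) = sin (α + β - φ) * sin (β - α) := by
  simp only [sin_sub, sin_add, cos_add]
  linear_combination (sin β * cos β * sin φ - sin β ^ 2 * cos φ) * sin_sq_add_cos_sq α +
    (sin α ^ 2 * cos φ - sin α * cos α * sin φ) * sin_sq_add_cos_sq β

lemma div_rpow_le_div_rpow_of_rpow_mul_rpow_le {x y s p q : ℝ} (hx : 0 ≤ x) (hy : 0 ≤ y)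
    (hs : 0 < s) (h : x ^ p * s ^ (q - p) ≤ y ^ q) : (x / s) ^ p ≤ (y / s) ^ q := by
  rw [div_rpow hx hs.le, div_rpow hy hs.le, div_le_div_iff₀ (rpow_pos_of_pos hs p)
    (rpow_pos_of_pos hs q), ← sub_add_cancel q p, rpow_add hs, sub_add_cancel, ← mul_assoc]
  exact mul_le_mul_of_nonneg_right h (rpow_nonneg hs.le p)

lemma sin_div_sub_mul_sin_div_of_sin_sub_eq {α β φ u : ℝ} (hu : sin (α - φ) = u * sin (β - φ))
    (hs : sin (β - φ) ≠ 0) (hδ : sin (β - α) ≠ 0) :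
    sin α / sin (β - α) - u * (sin β / sin (β - α)) = sin φ / sin (β - φ) ∧
      sin β / sin (β - α) - u * (sin α / sin (β - α)) = sin (α + β - φ) / sin (β - φ) := by
  have hu' : u = sin (α - φ) / sin (β - φ) := by rw [hu, mul_div_cancel_right₀ _ hs]
  subst hu'
  constructor
  · field_simp
    linear_combination sin_mul_sin_sub_sub_sin_mul_sin_sub α β φ
  · field_simp
    linear_combination sin_mul_sin_self_sub_sub_sin_mul_sin_self_sub α β φ

theorem stmt6 (q1 q2 : ℝ) (h1 : 0 < q1) (h2 : q1 < q2) (h3 : q2 ≤ 1)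
    (ρ1 ρ2 ρ : ℝ)
    (hρ1 : ρ1 = sin (q1 * π / 2) / sin ((q2 - q1) * π / 2))
    (hρ2 : ρ2 = sin (q2 * π / 2) / sin ((q2 - q1) * π / 2))
    (hρ : ρ = ρ1 / ρ2) :
    ∀ u : ℝ, 0 < u → u ≤ ρ → (ρ1 - u * ρ2) ^ q1 ≤ (ρ2 - u * ρ1) ^ q2 := by
  intro u hu huρ
  have hπ := pi_pos
  set α := q1 * π / 2 with hα_def
  set β := q2 * π / 2 with hβ_def
  have hα : 0 < α := by positivity
  have hαβ : α < β := by rw [hα_def, hβ_def]; gcongr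
  have hβ : β ≤ π / 2 := by rw [hβ_def]; nlinarith
  have hδ : (q2 - q1) * π / 2 = β - α := by ring
  rw [hδ] at hρ1 hρ2
  have hsβ : 0 < sin β := sin_pos_of_pos_of_lt_pi (by linarith) (by linarith)
  have hsδ : 0 < sin (β - α) := sin_pos_of_pos_of_lt_pi (by linarith) (by linarith)
  have hu_le : u * sin β ≤ sin α := by
    rwa [hρ, hρ1, hρ2, div_div_div_cancel_right₀ hsδ.ne', le_div_iff₀ hsβ] at huρ
  obtain ⟨φ, ⟨hφ₀, hφα⟩, hφ⟩ :=
    exists_sin_sub_eq_mul_sin_sub hu hα.le hαβ (by linarith) hu_le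
  have hs : 0 < sin (β - φ) := sin_pos_of_pos_of_lt_pi (by linarith) (by linarith)
  obtain ⟨hbase₁, hbase₂⟩ := sin_div_sub_mul_sin_div_of_sin_sub_eq hφ hs.ne' hsδ.ne'
  rw [hρ1, hρ2, hbase₁, hbase₂]
  exact div_rpow_le_div_rpow_of_rpow_mul_rpow_le
    (sin_nonneg_of_nonneg_of_le_pi hφ₀ (by linarith))
    (sin_nonneg_of_nonneg_of_le_pi (by linarith) (by linarith)) hs
    (sin_rpow_mul_sin_rpow_le h1.le h2.le (h1.trans h2) h3 hφ₀ (by linarith))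
end

section
/- With the notation of the parametric curve Γ (c > 0, 0 < q1 < q2 ≤ 1, ρ1, ρ2 as defined, a(ω) = c·ρ1·ω^{−q2} − ρ2·ω^{q1}, b(ω) = ρ1·ω^{q2} − c·ρ2·ω^{−q1}), for every ω > 0 one has a''(ω)·b'(ω) − a'(ω)·b''(ω) > 0. -/
/-! Both `a` and `b` have the form `C t ^ p - D t ^ q`, so `a'' b' - a' b''` is explicit; factoring
out `ω ^ (-q1 - q2 - 3)` leaves `ρ1 ρ2 q1 q2 (q2 - q1) (c² + W²) + 2 c W (q2³ ρ1² - q1³ ρ2²)` with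
`W = ω ^ (q1 + q2)`. The first term is positive, and the second is nonnegative because
`q1 ρ2 ≤ q2 ρ1`, i.e. `q1 sin (q2 π / 2) ≤ q2 sin (q1 π / 2)`: by concavity of `sin`, `sin x / x`
decreases on `(0, π]`. -/

open Real Set

lemma hasDerivAt_mul_rpow_sub_mul_rpow (C D p q : ℝ) {x : ℝ} (hx : 0 < x) :
    HasDerivAt (fun t : ℝ => C * t ^ p - D * t ^ q)
      (C * p * x ^ (p - 1) - D * q * x ^ (q - 1)) x := by
  have hp := (hasDerivAt_rpow_const (p := p) (Or.inl hx.ne')).const_mul C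
  have hq := (hasDerivAt_rpow_const (p := q) (Or.inl hx.ne')).const_mul D
  exact (hp.sub hq).congr_deriv (by ring)

lemma deriv_mul_rpow_sub_mul_rpow (C D p q : ℝ) {x : ℝ} (hx : 0 < x) :
    deriv (fun t : ℝ => C * t ^ p - D * t ^ q) x =
      C * p * x ^ (p - 1) - D * q * x ^ (q - 1) :=
  (hasDerivAt_mul_rpow_sub_mul_rpow C D p q hx).deriv

lemma deriv_deriv_mul_rpow_sub_mul_rpow (C D p q : ℝ) {x : ℝ} (hx : 0 < x) :
    deriv (deriv fun t : ℝ => C * t ^ p - D * t ^ q) x =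
      C * p * (p - 1) * x ^ (p - 2) - D * q * (q - 1) * x ^ (q - 2) := by
  have hderiv : deriv (fun t : ℝ => C * t ^ p - D * t ^ q) =ᶠ[nhds x]
      fun t => C * p * t ^ (p - 1) - D * q * t ^ (q - 1) :=
    Filter.eventuallyEq_of_mem (isOpen_Ioi.mem_nhds hx)
      fun t ht => deriv_mul_rpow_sub_mul_rpow C D p q ht
  rw [hderiv.deriv_eq, deriv_mul_rpow_sub_mul_rpow _ _ _ _ hx]
  ring_nf

lemma sin_div_self_antitoneOn : AntitoneOn (fun x => sin x / x) (Ioc 0 π) := by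
  intro x hx y hy hxy
  have h := strictConcaveOn_sin_Icc.concaveOn.antitoneOn_slope_gt
    (left_mem_Icc.mpr pi_pos.le) ⟨Ioc_subset_Icc_self hx, hx.1⟩ ⟨Ioc_subset_Icc_self hy, hy.1⟩ hxy
  simpa [slope_def_field] using h

lemma sin_mul_pi_div_two_pos {x : ℝ} (h0 : 0 < x) (h2 : x < 2) : 0 < sin (x * π / 2) :=
  sin_pos_of_pos_of_lt_pi (by positivity) (by nlinarith [pi_pos])

lemma mul_sin_mul_pi_div_two_le {x y : ℝ} (hx : 0 < x) (hxy : x ≤ y) (hy : y ≤ 2) :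
    x * sin (y * π / 2) ≤ y * sin (x * π / 2) := by
  have hπ := pi_pos
  have h := sin_div_self_antitoneOn ⟨by positivity, by nlinarith⟩
    ⟨by nlinarith, by nlinarith⟩ (by nlinarith : x * π / 2 ≤ y * π / 2)
  have hy0 : 0 < y := hx.trans_le hxy
  rw [div_le_div_iff₀ (by positivity) (by positivity)] at h
  nlinarith

lemma curvature_numerator_eq (c q1 q2 ρ1 ρ2 : ℝ) {ω : ℝ} (hω : 0 < ω) :
    (c * ρ1 * -q2 * (-q2 - 1) * ω ^ (-q2 - 2) - ρ2 * q1 * (q1 - 1) * ω ^ (q1 - 2)) *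
        (ρ1 * q2 * ω ^ (q2 - 1) - c * ρ2 * -q1 * ω ^ (-q1 - 1))
      - (c * ρ1 * -q2 * ω ^ (-q2 - 1) - ρ2 * q1 * ω ^ (q1 - 1)) *
        (ρ1 * q2 * (q2 - 1) * ω ^ (q2 - 2) - c * ρ2 * -q1 * (-q1 - 1) * ω ^ (-q1 - 2))
      = ω ^ (-q1 - q2 - 3) * (ρ1 * ρ2 * q1 * q2 * (q2 - q1) * (c ^ 2 + (ω ^ (q1 + q2)) ^ 2)
          + 2 * c * ω ^ (q1 + q2) * (q2 ^ 3 * ρ1 ^ 2 - q1 ^ 3 * ρ2 ^ 2)) := by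
  simp only [rpow_sub hω, rpow_add hω, rpow_neg hω.le, rpow_one, rpow_ofNat]
  have hu := (rpow_pos_of_pos hω q1).ne'
  have hv := (rpow_pos_of_pos hω q2).ne'
  field_simp
  ring

lemma curvature_numerator_pos {c q1 q2 ρ1 ρ2 W : ℝ} (hc : 0 < c) (hq1 : 0 < q1) (hq : q1 < q2)
    (hρ1 : 0 < ρ1) (hρ2 : 0 < ρ2) (hρ : q1 * ρ2 ≤ q2 * ρ1) (hW : 0 ≤ W) :
    0 < ρ1 * ρ2 * q1 * q2 * (q2 - q1) * (c ^ 2 + W ^ 2)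
      + 2 * c * W * (q2 ^ 3 * ρ1 ^ 2 - q1 ^ 3 * ρ2 ^ 2) := by
  have hq2 : 0 < q2 := hq1.trans hq
  have hsq : (q1 * ρ2) ^ 2 ≤ (q2 * ρ1) ^ 2 := pow_le_pow_left₀ (by positivity) hρ 2
  have hcube : q1 ^ 3 * ρ2 ^ 2 ≤ q2 ^ 3 * ρ1 ^ 2 := calc
    q1 ^ 3 * ρ2 ^ 2 = q1 * (q1 * ρ2) ^ 2 := by ring
    _ ≤ q2 * (q2 * ρ1) ^ 2 := by gcongr
    _ = q2 ^ 3 * ρ1 ^ 2 := by ring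
  have h1 : 0 < ρ1 * ρ2 * q1 * q2 * (q2 - q1) * (c ^ 2 + W ^ 2) := by
    have : 0 < q2 - q1 := sub_pos.mpr hq
    positivity
  have h2 : 0 ≤ 2 * c * W * (q2 ^ 3 * ρ1 ^ 2 - q1 ^ 3 * ρ2 ^ 2) := by
    have : 0 ≤ q2 ^ 3 * ρ1 ^ 2 - q1 ^ 3 * ρ2 ^ 2 := sub_nonneg.mpr hcube
    positivity
  linarith

theorem stmt8 (c q1 q2 : ℝ) (hc : 0 < c) (h1 : 0 < q1) (h2 : q1 < q2) (h3 : q2 ≤ 1)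
    (ρ1 ρ2 : ℝ)
    (hρ1 : ρ1 = sin (q1 * π / 2) / sin ((q2 - q1) * π / 2))
    (hρ2 : ρ2 = sin (q2 * π / 2) / sin ((q2 - q1) * π / 2))
    (a b : ℝ → ℝ)
    (ha : ∀ ω : ℝ, a ω = c * ρ1 * ω ^ (-q2) - ρ2 * ω ^ q1)
    (hb : ∀ ω : ℝ, b ω = ρ1 * ω ^ q2 - c * ρ2 * ω ^ (-q1)) :
    ∀ ω : ℝ, 0 < ω →
      deriv (deriv a) ω * deriv b ω - deriv a ω * deriv (deriv b) ω > 0 := by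
  intro ω hω
  have hs : 0 < sin ((q2 - q1) * π / 2) := sin_mul_pi_div_two_pos (by linarith) (by linarith)
  have hρ1_pos : 0 < ρ1 := hρ1 ▸ div_pos (sin_mul_pi_div_two_pos h1 (by linarith)) hs
  have hρ2_pos : 0 < ρ2 := hρ2 ▸ div_pos (sin_mul_pi_div_two_pos (by linarith) (by linarith)) hs
  have hρ : q1 * ρ2 ≤ q2 * ρ1 := by
    rw [hρ1, hρ2, ← mul_div_assoc, ← mul_div_assoc]
    exact div_le_div_of_nonneg_right (mul_sin_mul_pi_div_two_le h1 h2.le (by linarith)) hs.le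
  obtain rfl : a = fun t => c * ρ1 * t ^ (-q2) - ρ2 * t ^ q1 := funext ha
  obtain rfl : b = fun t => ρ1 * t ^ q2 - c * ρ2 * t ^ (-q1) := funext hb
  rw [deriv_deriv_mul_rpow_sub_mul_rpow _ _ _ _ hω, deriv_deriv_mul_rpow_sub_mul_rpow _ _ _ _ hω,
    deriv_mul_rpow_sub_mul_rpow _ _ _ _ hω, deriv_mul_rpow_sub_mul_rpow _ _ _ _ hω,
    curvature_numerator_eq c q1 q2 ρ1 ρ2 hω]
  exact mul_pos (rpow_pos_of_pos hω _)
    (curvature_numerator_pos hc h1 h2 hρ1_pos hρ2_pos hρ (rpow_pos_of_pos hω _).le)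
end

section
/- Let 0 < q1 < q2 < 1, a ≥ 0, b ≥ 0, c > 0. Then the complex function Δ(s) = s^{q1+q2} + a·s^{q2} + b·s^{q1} + c (principal branches of the complex powers) has no root s with Re(s) ≥ 0. -/
open Real

lemma re_cpow_pos {s : ℂ} (hs : s ≠ 0) (hre : 0 ≤ s.re) {q : ℝ} (hq : 0 < q) (hq1 : q < 1) :
    0 < (s ^ (q : ℂ)).re := by
  rw [Complex.cpow_def_of_ne_zero hs, Complex.exp_re]
  have harg : |s.arg| ≤ π / 2 := Complex.abs_arg_le_pi_div_two_iff.mpr hre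
  have him : (Complex.log s * (q : ℂ)).im = s.arg * q := by
    simp [Complex.mul_im, Complex.log_im]
  have hcos : 0 < Real.cos ((Complex.log s * (q : ℂ)).im) := by
    rw [him]
    apply Real.cos_pos_of_mem_Ioo
    constructor
    · nlinarith [abs_le.mp harg, Real.pi_pos]
    · nlinarith [abs_le.mp harg, Real.pi_pos]
  positivity

theorem stmt12 (q1 q2 a b c : ℝ) (h1 : 0 < q1) (h2 : q1 < q2) (h3 : q2 < 1)
    (ha : 0 ≤ a) (hb : 0 ≤ b) (hc : 0 < c) :
    ∀ s : ℂ, 0 ≤ s.re →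
      s ^ ((q1 : ℂ) + q2) + (a : ℂ) * s ^ (q2 : ℂ) + (b : ℂ) * s ^ (q1 : ℂ) + (c : ℂ) ≠ 0 := by
  intro s hre heq
  by_cases hs : s = 0
  · subst hs
    have hq1 : (q1 : ℂ) ≠ 0 := by exact_mod_cast h1.ne'
    have hq2 : (q2 : ℂ) ≠ 0 := by exact_mod_cast (h1.trans h2).ne'
    have hq12 : (q1 : ℂ) + q2 ≠ 0 := by
      have : (0:ℝ) < q1 + q2 := by linarith
      exact_mod_cast this.ne'
    rw [Complex.zero_cpow hq1, Complex.zero_cpow hq2, Complex.zero_cpow hq12] at heq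
    simp at heq
    exact hc.ne' heq
  · have h1r := re_cpow_pos hs hre h1 (h2.trans h3)
    have h2r := re_cpow_pos hs hre (h1.trans h2) h3
    rw [Complex.cpow_add _ _ hs] at heq
    set z1 := s ^ (q1 : ℂ)
    set z2 := s ^ (q2 : ℂ)
    have hRe := congrArg Complex.re heq
    have hIm := congrArg Complex.im heq
    simp [Complex.add_re, Complex.add_im, Complex.mul_re, Complex.mul_im] at hRe hIm
    have key : z1.re * ((z2.re + b) ^ 2 + z2.im ^ 2) + a * (z2.re ^ 2 + z2.im ^ 2)
        + a * b * z2.re + c * z2.re + b * c = 0 := by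
      linear_combination (z2.re + b) * hRe + z2.im * hIm
    nlinarith [sq_nonneg z2.im, sq_nonneg (z2.re + b), mul_pos h1r h2r,
      mul_nonneg ha (sq_nonneg z2.im), mul_nonneg ha (sq_nonneg z2.re),
      mul_nonneg (mul_nonneg ha hb) h2r.le, mul_pos hc h2r,
      mul_nonneg hb hc.le, mul_pos h1r (mul_pos h2r h2r),
      mul_nonneg h1r.le (sq_nonneg z2.im), mul_nonneg (mul_nonneg h1r.le hb) h2r.le,
      mul_nonneg h1r.le (sq_nonneg b)]
end

section
/- Let 0 < q1 < q2 < 1, a, b, c ∈ ℝ, c > 0, ω > 0. The purely imaginary number iω satisfies (iω)^{q1+q2} + a(iω)^{q2} + b(iω)^{q1} + c = 0 (principal branches) if and only if a = c·ρ1·ω^{−q2} − ρ2·ω^{q1} and b = ρ1·ω^{q2} − c·ρ2·ω^{−q1}, where ρ1 = sin(q1π/2)/sin((q2−q1)π/2) and ρ2 = sin(q2π/2)/sin((q2−q1)π/2). -/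
/-!
On the principal branch `(iω)^q = ω^q e^{iqπ/2}`, so with `θₖ = qₖπ/2` the equation reads
`ω^{q₁+q₂} e^{i(θ₁+θ₂)} + aω^{q₂} e^{iθ₂} + bω^{q₁} e^{iθ₁} + c = 0`. Its real and imaginary parts
form a linear system in `(aω^{q₂}, bω^{q₁})` with determinant `-sin(θ₂ - θ₁)`, which is nonzero
because `0 < θ₂ - θ₁ < π/2`; Cramer's rule then gives the formulas for `a` and `b`.
-/

open Real Complex

theorem linear_system_two_iff {K : Type*} [Field K] {p₁ p₂ q₁ q₂ r s x y : K}
    (hdet : p₁ * q₂ - p₂ * q₁ ≠ 0) :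
    (x * p₁ + y * q₁ = r ∧ x * p₂ + y * q₂ = s) ↔
      (x * (p₁ * q₂ - p₂ * q₁) = r * q₂ - s * q₁ ∧ y * (p₁ * q₂ - p₂ * q₁) = p₁ * s - p₂ * r) := by
  constructor
  · rintro ⟨h₁, h₂⟩
    exact ⟨by linear_combination q₂ * h₁ - q₁ * h₂, by linear_combination p₁ * h₂ - p₂ * h₁⟩
  · rintro ⟨hx, hy⟩
    exact ⟨mul_right_cancel₀ hdet (by linear_combination p₁ * hx + q₁ * hy),
      mul_right_cancel₀ hdet (by linear_combination p₂ * hx + q₂ * hy)⟩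

theorem I_mul_ofReal_cpow_ofReal {ω : ℝ} (hω : 0 < ω) (q : ℝ) :
    (I * ω) ^ (q : ℂ) = ((ω ^ q : ℝ) : ℂ) * exp (((q * π / 2 : ℝ) : ℂ) * I) := by
  have hlog : log (I * ω) = Real.log ω + π / 2 * I := by
    rw [mul_comm, log_ofReal_mul hω I_ne_zero, log_I]
  rw [cpow_def_of_ne_zero (by simp [hω.ne']), hlog, add_mul, Complex.exp_add,
    ofReal_cpow hω.le, cpow_def_of_ne_zero (by simp [hω.ne']), ofReal_log hω.le]
  push_cast
  ring_nf

theorem exp_mul_I_linear_combination_eq_zero_iff {θ₁ θ₂ P A B c : ℝ}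
    (hS : Real.sin (θ₂ - θ₁) ≠ 0) :
    (P * exp (↑(θ₁ + θ₂) * I) + A * exp (↑θ₂ * I) + B * exp (↑θ₁ * I) + c = 0) ↔
      (A * Real.sin (θ₂ - θ₁) = c * Real.sin θ₁ - P * Real.sin θ₂ ∧
        B * Real.sin (θ₂ - θ₁) = P * Real.sin θ₁ - c * Real.sin θ₂) := by
  have hdet : Real.cos θ₂ * Real.sin θ₁ - Real.sin θ₂ * Real.cos θ₁ = -Real.sin (θ₂ - θ₁) := by
    rw [Real.sin_sub]; ring
  have hsin₁ : Real.sin θ₁ =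
      Real.sin (θ₁ + θ₂) * Real.cos θ₂ - Real.cos (θ₁ + θ₂) * Real.sin θ₂ := by
    simpa using Real.sin_sub (θ₁ + θ₂) θ₂
  have hsin₂ : Real.sin θ₂ =
      Real.sin (θ₁ + θ₂) * Real.cos θ₁ - Real.cos (θ₁ + θ₂) * Real.sin θ₁ := by
    simpa using Real.sin_sub (θ₁ + θ₂) θ₁
  have hr₁ : -(P * Real.cos (θ₁ + θ₂) + c) * Real.sin θ₁ - -(P * Real.sin (θ₁ + θ₂)) * Real.cos θ₁
      = -(c * Real.sin θ₁ - P * Real.sin θ₂) := by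
    linear_combination -P * hsin₂
  have hr₂ : Real.cos θ₂ * -(P * Real.sin (θ₁ + θ₂)) - Real.sin θ₂ * -(P * Real.cos (θ₁ + θ₂) + c)
      = -(P * Real.sin θ₁ - c * Real.sin θ₂) := by
    linear_combination P * hsin₁
  rw [Complex.ext_iff]
  simp only [add_re, add_im, re_ofReal_mul, im_ofReal_mul, exp_ofReal_mul_I_re,
    exp_ofReal_mul_I_im, ofReal_re, ofReal_im, zero_re, zero_im, add_zero]
  calc _ ↔ (A * Real.cos θ₂ + B * Real.cos θ₁ = -(P * Real.cos (θ₁ + θ₂) + c) ∧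
        A * Real.sin θ₂ + B * Real.sin θ₁ = -(P * Real.sin (θ₁ + θ₂))) :=
        and_congr (by constructor <;> intro h <;> linear_combination h)
          (by constructor <;> intro h <;> linear_combination h)
    _ ↔ _ := linear_system_two_iff (by rw [hdet]; exact neg_ne_zero.mpr hS)
    _ ↔ _ := by rw [hdet, hr₁, hr₂, mul_neg, mul_neg, neg_inj, neg_inj]

theorem stmt13_general (q1 q2 a b c ω : ℝ) (h1 : 0 < q1) (h2 : q1 < q2) (h3 : q2 < 1)
    (hω : 0 < ω)
    (ρ1 ρ2 : ℝ)
    (hρ1 : ρ1 = Real.sin (q1 * π / 2) / Real.sin ((q2 - q1) * π / 2))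
    (hρ2 : ρ2 = Real.sin (q2 * π / 2) / Real.sin ((q2 - q1) * π / 2)) :
    ((Complex.I * ω) ^ ((q1 : ℂ) + q2) + (a : ℂ) * (Complex.I * ω) ^ (q2 : ℂ)
        + (b : ℂ) * (Complex.I * ω) ^ (q1 : ℂ) + (c : ℂ) = 0)
      ↔ (a = c * ρ1 * ω ^ (-q2) - ρ2 * ω ^ q1 ∧ b = ρ1 * ω ^ q2 - c * ρ2 * ω ^ (-q1)) := by
  have hS : 0 < Real.sin (q2 * π / 2 - q1 * π / 2) :=
    Real.sin_pos_of_pos_of_lt_pi (by nlinarith [pi_pos]) (by nlinarith [pi_pos])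
  have hpolar : (I * ω) ^ ((q1 : ℂ) + q2) + (a : ℂ) * (I * ω) ^ (q2 : ℂ)
      + (b : ℂ) * (I * ω) ^ (q1 : ℂ) + (c : ℂ)
      = ↑(ω ^ q1 * ω ^ q2) * exp (↑(q1 * π / 2 + q2 * π / 2) * I)
        + ↑(a * ω ^ q2) * exp (↑(q2 * π / 2) * I) + ↑(b * ω ^ q1) * exp (↑(q1 * π / 2) * I)
        + c := by
    rw [← ofReal_add, I_mul_ofReal_cpow_ofReal hω, I_mul_ofReal_cpow_ofReal hω,
      I_mul_ofReal_cpow_ofReal hω, rpow_add hω, ← add_div, ← add_mul]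
    push_cast
    ring
  rw [hpolar, exp_mul_I_linear_combination_eq_zero_iff hS.ne', hρ1, hρ2, rpow_neg hω.le,
    rpow_neg hω.le, show (q2 - q1) * π / 2 = q2 * π / 2 - q1 * π / 2 by ring]
  have hu : 0 < ω ^ q1 := rpow_pos_of_pos hω q1
  have hv : 0 < ω ^ q2 := rpow_pos_of_pos hω q2
  generalize Real.sin (q2 * π / 2 - q1 * π / 2) = S at hS ⊢
  generalize Real.sin (q1 * π / 2) = s₁
  generalize Real.sin (q2 * π / 2) = s₂
  generalize ω ^ q1 = u at hu ⊢
  generalize ω ^ q2 = v at hv ⊢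
  field_simp

theorem stmt13 (q1 q2 a b c ω : ℝ) (h1 : 0 < q1) (h2 : q1 < q2) (h3 : q2 < 1)
    (hc : 0 < c) (hω : 0 < ω)
    (ρ1 ρ2 : ℝ)
    (hρ1 : ρ1 = Real.sin (q1 * π / 2) / Real.sin ((q2 - q1) * π / 2))
    (hρ2 : ρ2 = Real.sin (q2 * π / 2) / Real.sin ((q2 - q1) * π / 2)) :
    ((Complex.I * ω) ^ ((q1 : ℂ) + q2) + (a : ℂ) * (Complex.I * ω) ^ (q2 : ℂ)
        + (b : ℂ) * (Complex.I * ω) ^ (q1 : ℂ) + (c : ℂ) = 0)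
      ↔ (a = c * ρ1 * ω ^ (-q2) - ρ2 * ω ^ q1 ∧ b = ρ1 * ω ^ q2 - c * ρ2 * ω ^ (-q1)) :=
  stmt13_general q1 q2 a b c ω h1 h2 h3 hω ρ1 ρ2 hρ1 hρ2
end
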